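/- No indefinite circulation: there exists δ > 0 such that (i) the closed δ-balls around distinct points of S are pairwise disjoint, and (ii) for every token index i ∈ {1,…,n} there exist s_i ∈ S and k_i ∈ ℕ such that z_i^k ∈ B_δ(s_i) for all k ≥ k_i. -/

import Mathlib

open scoped RealInnerProductSpace BigOperators Classical
open Filter Metric

noncomputable section

/-- The hardmax attention (argmax) index set `C_i` for a token configuration `z`
(attention matrix `A = I`): the set of indices `j` maximizing `⟪z_i, z_j⟫`. -/
def attn {d n : ℕ} (z : Fin n → EuclideanSpace ℝ (Fin d)) (i : Fin n) : Finset (Fin n) :=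
  Finset.univ.filter fun j => (⟪z i, z j⟫ = ⨆ ℓ, ⟪z i, z ℓ⟫)

/-- The pure-attention hardmax transformer dynamics with step-size `α > 0` and `A = I`:
`z_i^{k+1} = z_i^k + (α/(1+α))·(1/|C_i^k|)·Σ_{j ∈ C_i^k} (z_j^k − z_i^k)`. -/
def IsDyn {d n : ℕ} (α : ℝ) (z : ℕ → Fin n → EuclideanSpace ℝ (Fin d)) : Prop :=
  ∀ k i, z (k + 1) i = z k i +
    (α / (1 + α)) • (((attn (z k) i).card : ℝ)⁻¹ • ∑ j ∈ attn (z k) i, (z k j - z k i))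

/-- The limiting set `K = ⋂ₖ co(Z^k)`, the intersection of the convex hulls of the token
configurations over all times. -/
def limitK {d n : ℕ} (z : ℕ → Fin n → EuclideanSpace ℝ (Fin d)) :
    Set (EuclideanSpace ℝ (Fin d)) :=
  ⋂ k, convexHull ℝ (Set.range (z k))

/-- The cluster set `S = { x ∈ K : max_{v ∈ V} ⟪v − x, x⟫ = 0 }`, where `V` is the set of
extreme points (vertices) of `K`; `max … = 0` is phrased as: `0` is the greatest element of
the set of values `⟪v − x, x⟫`, `v ∈ V`. -/
def clusterSet {d : ℕ} (K : Set (EuclideanSpace ℝ (Fin d))) :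
    Set (EuclideanSpace ℝ (Fin d)) :=
  {x ∈ K | IsGreatest ((fun v => ⟪v - x, x⟫) '' (Set.extremePoints ℝ K)) 0}

/-!
Each update moves `z_i` towards a convex combination `b` of the tokens maximising `⟪z_i, ·⟫`,
so the convex hulls `co(Z^k)` decrease and `‖z_i‖²` increases by the gap
`2c(⟪z_i, b⟫ - ‖z_i‖²) ≥ 0` plus the squared step, where `c = α/(1+α)`. As `‖z_i‖²` is
bounded, both the steps and the gap tend to zero. Along a convergent subsequence of
configurations the limit set `K` is the polytope spanned by the limit configuration `w`, and `S`
is finite: a point of `S` is determined by the vertices of `w` on its supporting hyperplane.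
A compactness argument then shows that a token near `K` and away from `S` has gap bounded
below, so every token eventually stays near `S`; as its steps become shorter than the gaps
between the balls around points of `S`, it stays near a single one.
-/

open Topology

section InnerProductSpace

variable {E : Type*} [NormedAddCommGroup E] [InnerProductSpace ℝ E]

lemma inner_sub_self_left (v x : E) : ⟪v - x, x⟫ = ⟪x, v⟫ - ‖x‖ ^ 2 := by
  rw [inner_sub_left, real_inner_comm, real_inner_self_eq_norm_sq]

lemma norm_add_smul_sub_sq (c : ℝ) (x b : E) :
    ‖x + c • (b - x)‖ ^ 2 = ‖x‖ ^ 2 + 2 * c * (⟪x, b⟫ - ‖x‖ ^ 2) + ‖c • (b - x)‖ ^ 2 := by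
  rw [norm_add_sq_real, real_inner_smul_right, inner_sub_right, real_inner_self_eq_norm_sq]
  ring

lemma convexHull_subset_setOf_inner_le {s : Set E} {x : E} {M : ℝ}
    (h : ∀ y ∈ s, ⟪x, y⟫ ≤ M) : convexHull ℝ s ⊆ {y | ⟪x, y⟫ ≤ M} :=
  convexHull_min h (convex_halfSpace_le (innerₛₗ ℝ x).isLinear M)

lemma Finset.mem_convexHull_filter_of_forall_le {F : Type*} [AddCommGroup F] [Module ℝ F]
    {s : Finset F} {x : F} (f : F →ₗ[ℝ] ℝ) (hx : x ∈ convexHull ℝ (s : Set F))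
    (hle : ∀ v ∈ s, f v ≤ f x) : x ∈ convexHull ℝ (s.filter fun v => f v = f x : Set F) := by
  obtain ⟨μ, hμ0, hμ1, hμx⟩ := Finset.mem_convexHull'.1 hx
  have hfx : f x = ∑ v ∈ s, μ v * f v := by simp [← hμx, map_sum]
  have hsum : ∑ v ∈ s, μ v * (f x - f v) = 0 := by
    simp only [mul_sub, Finset.sum_sub_distrib, ← Finset.sum_mul, hμ1, one_mul, ← hfx, sub_self]
  have hface : ∀ v ∈ s, μ v ≠ 0 → f v = f x := fun v hv hμv => by
    have := (Finset.sum_eq_zero_iff_of_nonneg fun u hu =>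
      mul_nonneg (hμ0 u hu) (sub_nonneg.2 (hle u hu))).1 hsum v hv
    linarith [(mul_eq_zero.1 this).resolve_left hμv]
  refine Finset.mem_convexHull'.2 ⟨μ, fun v hv => hμ0 v (Finset.mem_filter.1 hv).1, ?_, ?_⟩
  · rwa [Finset.sum_filter_of_ne hface]
  · rwa [Finset.sum_filter_of_ne fun v hv h => hface v hv (left_ne_zero_of_smul h)]

lemma Set.Finite.finite_setOf_mem_convexHull_forall_inner_le {s : Set E} (hs : s.Finite) :
    {x ∈ convexHull ℝ s | ∀ v ∈ s, ⟪x, v⟫ ≤ ‖x‖ ^ 2}.Finite := by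
  lift s to Finset E using hs
  set P := {x ∈ convexHull ℝ (s : Set E) | ∀ v ∈ s, ⟪x, v⟫ ≤ ‖x‖ ^ 2}
  let T : E → Finset E := fun x => s.filter fun v => ⟪x, v⟫ = ⟪x, x⟫
  have hT : ∀ x ∈ P, ∀ y, T x = T y → ⟪y, x⟫ = ⟪y, y⟫ := by
    intro x hx y hxy
    have hxT : x ∈ convexHull ℝ (T x : Set E) :=
      s.mem_convexHull_filter_of_forall_le (innerₛₗ ℝ x) hx.1 fun v hv => by
        simpa [real_inner_self_eq_norm_sq] using hx.2 v hv
    rw [hxy] at hxT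
    exact convexHull_min (fun v hv => (Finset.mem_filter.1 hv).2)
      (convex_hyperplane (innerₛₗ ℝ y).isLinear _) hxT
  refine Set.Finite.of_finite_image (f := T) (s.powerset.finite_toSet.subset ?_) ?_
  · rintro _ ⟨x, -, rfl⟩
    exact Finset.mem_powerset.2 (Finset.filter_subset _ _)
  · intro x hx y hy hxy
    have h₁ := hT x hx y hxy
    have h₂ := hT y hy x hxy.symm
    rw [← sub_eq_zero, ← inner_self_eq_zero (𝕜 := ℝ), inner_sub_left, inner_sub_right,
      inner_sub_right]
    linarith [real_inner_comm x y]

end InnerProductSpace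

lemma IsCompact.exists_mem_extremePoints_forall_le {F : Type*} [AddCommGroup F] [Module ℝ F]
    [TopologicalSpace F] [T2Space F] [IsTopologicalAddGroup F] [ContinuousSMul ℝ F]
    [LocallyConvexSpace ℝ F] {K : Set F} (hK : IsCompact K) (hne : K.Nonempty)
    (l : StrongDual ℝ F) : ∃ v ∈ K.extremePoints ℝ, ∀ y ∈ K, l y ≤ l v := by
  obtain ⟨x, hxK, hx⟩ := hK.exists_isMaxOn hne l.continuous.continuousOn
  have hexp : IsExposed ℝ K (l.toExposed K) := ContinuousLinearMap.toExposed.isExposed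
  obtain ⟨v, hv⟩ := (hexp.isCompact hK).extremePoints_nonempty ⟨x, hxK, hx⟩
  exact ⟨v, hexp.isExtreme.extremePoints_subset_extremePoints hv, (extremePoints_subset hv).2⟩

section ClusterSet

variable {d : ℕ}

lemma mem_clusterSet_iff {K : Set (EuclideanSpace ℝ (Fin d))} (hK : IsCompact K)
    (hKc : Convex ℝ K) {x : EuclideanSpace ℝ (Fin d)} :
    x ∈ clusterSet K ↔ x ∈ K ∧ ∀ y ∈ K, ⟪x, y⟫ ≤ ‖x‖ ^ 2 := by
  simp only [clusterSet, Set.mem_sep_iff, inner_sub_self_left]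
  refine and_congr_right fun hx => ⟨fun h => ?_, fun h => ?_⟩
  · have hext : ∀ v ∈ K.extremePoints ℝ, ⟪x, v⟫ ≤ ‖x‖ ^ 2 :=
      fun v hv => sub_nonpos.1 (h.2 ⟨v, hv, rfl⟩)
    rw [← closure_convexHull_extremePoints hK hKc]
    exact closure_minimal (convexHull_subset_setOf_inner_le hext)
      (isClosed_le (by fun_prop : Continuous fun y => ⟪x, y⟫) continuous_const)
  · obtain ⟨v, hv, hmax⟩ := hK.exists_mem_extremePoints_forall_le ⟨x, hx⟩ (innerSL ℝ x)
    have hxv : ⟪x, v⟫ = ‖x‖ ^ 2 := le_antisymm (h v (extremePoints_subset hv))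
      (by simpa [real_inner_self_eq_norm_sq] using hmax x hx)
    refine ⟨⟨v, hv, by simp [hxv]⟩, ?_⟩
    rintro _ ⟨u, hu, rfl⟩
    exact sub_nonpos.2 (h u (extremePoints_subset hu))

lemma mem_clusterSet_convexHull_iff {s : Set (EuclideanSpace ℝ (Fin d))} (hs : s.Finite)
    {x : EuclideanSpace ℝ (Fin d)} :
    x ∈ clusterSet (convexHull ℝ s) ↔ x ∈ convexHull ℝ s ∧ ∀ v ∈ s, ⟪x, v⟫ ≤ ‖x‖ ^ 2 := by
  rw [mem_clusterSet_iff (hs.isCompact_convexHull ℝ) (convex_convexHull ℝ s)]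
  exact and_congr_right fun _ => ⟨fun h v hv => h v (subset_convexHull ℝ s hv),
    fun h y hy => convexHull_subset_setOf_inner_le h hy⟩

lemma Set.Finite.finite_clusterSet_convexHull {s : Set (EuclideanSpace ℝ (Fin d))}
    (hs : s.Finite) : (clusterSet (convexHull ℝ s)).Finite :=
  hs.finite_setOf_mem_convexHull_forall_inner_le.subset fun _ hx =>
    (mem_clusterSet_convexHull_iff hs).1 hx

end ClusterSet

section LimitSet

variable {ι E : Type*} [Finite ι] [NormedAddCommGroup E] [NormedSpace ℝ E]

lemma iInter_convexHull_eq_convexHull_of_tendsto {z : ℕ → ι → E}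
    (hz : Antitone fun k => convexHull ℝ (Set.range (z k))) {φ : ℕ → ℕ} (hφ : StrictMono φ)
    {w : ι → E} (hw : Tendsto (z ∘ φ) atTop (𝓝 w)) :
    ⋂ k, convexHull ℝ (Set.range (z k)) = convexHull ℝ (Set.range w) := by
  have hwj : ∀ j, Tendsto (fun m => z (φ m) j) atTop (𝓝 (w j)) := tendsto_pi_nhds.1 hw
  have hwK : ∀ j, w j ∈ ⋂ k, convexHull ℝ (Set.range (z k)) := by
    refine fun j => Set.mem_iInter.2 fun k => ?_
    refine ((Set.finite_range _).isCompact_convexHull ℝ).isClosed.mem_of_tendsto (hwj j) ?_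
    filter_upwards [eventually_ge_atTop k] with m hm
    exact hz (hm.trans hφ.le_apply) (subset_convexHull ℝ _ (Set.mem_range_self j))
  refine subset_antisymm (fun x hx => ?_)
    (convexHull_min (Set.range_subset_iff.2 hwK) (convex_iInter fun k => convex_convexHull ℝ _))
  by_contra hxw
  obtain ⟨f, u, hfx, hfw⟩ := geometric_hahn_banach_point_closed (convex_convexHull ℝ _)
    ((Set.finite_range w).isCompact_convexHull ℝ).isClosed hxw
  obtain ⟨m, hm⟩ := (eventually_all.2 fun j => ((f.continuous.tendsto _).comp (hwj j)).eventually
    (lt_mem_nhds (hfw _ (subset_convexHull ℝ _ (Set.mem_range_self j))))).exists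
  have hhalf : convexHull ℝ (Set.range (z (φ m))) ⊆ {y | u < f y} :=
    convexHull_min (Set.range_subset_iff.2 hm) (convex_halfSpace_gt f.toLinearMap.isLinear u)
  exact hfx.not_gt (hhalf (Set.mem_iInter.1 hx _))

lemma exists_iInter_convexHull_eq_convexHull {z : ℕ → ι → E}
    (hz : Antitone fun k => convexHull ℝ (Set.range (z k))) :
    ∃ w : ι → E, ⋂ k, convexHull ℝ (Set.range (z k)) = convexHull ℝ (Set.range w) := by
  obtain ⟨w, -, φ, hφ, hw⟩ :=
    (isCompact_univ_pi fun _ : ι => (Set.finite_range (z 0)).isCompact_convexHull ℝ).tendsto_subseq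
      fun k => Set.mem_univ_pi.2 fun i => hz (Nat.zero_le k) (subset_convexHull ℝ _ ⟨i, rfl⟩)
  exact ⟨w, iInter_convexHull_eq_convexHull_of_tendsto hz hφ hw⟩

end LimitSet

lemma Antitone.eventually_subset_of_iInter_subset {X : Type*} [TopologicalSpace X] [T2Space X]
    {V : ℕ → Set X} (hV : Antitone V) (hc : ∀ k, IsCompact (V k)) {U : Set X} (hU : IsOpen U)
    (h : ⋂ k, V k ⊆ U) : ∀ᶠ k in atTop, V k ⊆ U := by
  obtain ⟨k₀, hk₀⟩ :=
    exists_subset_nhds_of_isCompact hV.directed_ge hc fun x hx => hU.mem_nhds (h hx)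
  exact eventually_atTop.2 ⟨k₀, fun k hk => (hV hk).trans hk₀⟩

lemma IsCompact.exists_pos_forall_thickening_sdiff_le {X : Type*} [PseudoMetricSpace X]
    [ProperSpace X] {K U : Set X} {g : X → ℝ} (hK : IsCompact K) (hU : IsOpen U)
    (hg : Continuous g) (hpos : ∀ x ∈ K \ U, 0 < g x) :
    ∃ ρ > 0, ∃ η > 0, ∀ x ∈ thickening ρ K \ U, η ≤ g x := by
  obtain ⟨ρ, hρ, hρV⟩ :=
    hK.exists_cthickening_subset_open ((isOpen_lt continuous_const hg).union hU)
      fun x hx => (em (x ∈ U)).elim Or.inr fun hxU => Or.inl (hpos x ⟨hx, hxU⟩)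
  obtain ⟨η, hη, hηg⟩ := (hK.cthickening.diff hU).exists_forall_le' hg.continuousOn
    fun x hx => (hρV hx.1).resolve_right hx.2
  exact ⟨ρ, hρ, η, hη, fun x hx => hηg x ⟨thickening_subset_cthickening _ _ hx.1, hx.2⟩⟩

lemma Set.Finite.exists_pos_le_dist {X : Type*} [MetricSpace X] {S : Set X} (hS : S.Finite) :
    ∃ r > 0, ∀ s ∈ S, ∀ s' ∈ S, s ≠ s' → r ≤ dist s s' := by
  obtain ⟨C, hC, hCS⟩ := hS.relatively_discrete
  obtain ⟨r, -, hr, hrC⟩ := ENNReal.lt_iff_exists_real_btwn.1 hC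
  refine ⟨r, ENNReal.ofReal_pos.1 hr, fun s hs s' hs' hne => ?_⟩
  have := hrC.le.trans (hCS s hs s' hs' hne)
  rwa [edist_dist, ENNReal.ofReal_le_ofReal_iff dist_nonneg] at this

lemma exists_eventually_dist_lt_of_separated {X : Type*} [PseudoMetricSpace X] {S : Set X}
    {δ : ℝ} (hS : ∀ s ∈ S, ∀ s' ∈ S, s ≠ s' → 3 * δ ≤ dist s s') {x : ℕ → X}
    (hnear : ∀ᶠ k in atTop, ∃ s ∈ S, dist (x k) s < δ)
    (hstep : ∀ᶠ k in atTop, dist (x (k + 1)) (x k) < δ) :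
    ∃ s ∈ S, ∀ᶠ k in atTop, dist (x k) s < δ := by
  obtain ⟨k₀, hk₀⟩ := eventually_atTop.1 (hnear.and hstep)
  obtain ⟨s, hs, hk₀s⟩ := (hk₀ k₀ le_rfl).1
  refine ⟨s, hs, eventually_atTop.2 ⟨k₀, fun k hk => ?_⟩⟩
  induction k, hk using Nat.le_induction with
  | base => exact hk₀s
  | succ k hk ih =>
    obtain ⟨s', hs', hks'⟩ := (hk₀ (k + 1) (by omega)).1
    obtain rfl : s' = s := by
      by_contra hne
      linarith [hS s' hs' s hs hne, dist_triangle4 s' (x (k + 1)) (x k) s,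
        dist_comm s' (x (k + 1)), (hk₀ k hk).2]
    exact hks'

lemma Monotone.tendsto_add_one_sub {a : ℕ → ℝ} (ha : Monotone a) (hb : BddAbove (Set.range a)) :
    Tendsto (fun k => a (k + 1) - a k) atTop (𝓝 0) := by
  have h := tendsto_atTop_ciSup ha hb
  simpa using (h.comp (tendsto_add_atTop_nat 1)).sub h

section Dynamics

variable {d n : ℕ} {α : ℝ} {z : ℕ → Fin n → EuclideanSpace ℝ (Fin d)}

def attnMean (x : Fin n → EuclideanSpace ℝ (Fin d)) (i : Fin n) : EuclideanSpace ℝ (Fin d) :=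
  ((attn x i).card : ℝ)⁻¹ • ∑ j ∈ attn x i, x j

lemma inner_le_iSup_of_mem_convexHull (x : Fin n → EuclideanSpace ℝ (Fin d)) (i : Fin n)
    {y : EuclideanSpace ℝ (Fin d)} (hy : y ∈ convexHull ℝ (Set.range x)) :
    ⟪x i, y⟫ ≤ ⨆ ℓ, ⟪x i, x ℓ⟫ := by
  refine convexHull_subset_setOf_inner_le ?_ hy
  rintro _ ⟨ℓ, rfl⟩
  exact le_ciSup (f := fun ℓ => ⟪x i, x ℓ⟫) (Set.finite_range _).bddAbove ℓ

lemma sq_norm_le_iSup_inner (x : Fin n → EuclideanSpace ℝ (Fin d)) (i : Fin n) :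
    ‖x i‖ ^ 2 ≤ ⨆ ℓ, ⟪x i, x ℓ⟫ :=
  real_inner_self_eq_norm_sq (x i) ▸
    inner_le_iSup_of_mem_convexHull x i (subset_convexHull ℝ _ (Set.mem_range_self i))

lemma attn_nonempty (x : Fin n → EuclideanSpace ℝ (Fin d)) (i : Fin n) : (attn x i).Nonempty := by
  have : Nonempty (Fin n) := ⟨i⟩
  obtain ⟨j, hj⟩ := Finite.exists_max fun ℓ => ⟪x i, x ℓ⟫
  exact ⟨j, Finset.mem_filter.2 ⟨Finset.mem_univ _, le_antisymm
    (le_ciSup (f := fun ℓ => ⟪x i, x ℓ⟫) (Set.finite_range _).bddAbove j) (ciSup_le hj)⟩⟩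

lemma inner_eq_iSup_of_mem_attn {x : Fin n → EuclideanSpace ℝ (Fin d)} {i j : Fin n}
    (hj : j ∈ attn x i) : ⟪x i, x j⟫ = ⨆ ℓ, ⟪x i, x ℓ⟫ :=
  (Finset.mem_filter.1 hj).2

lemma attnMean_mem_convexHull (x : Fin n → EuclideanSpace ℝ (Fin d)) (i : Fin n) :
    attnMean x i ∈ convexHull ℝ (Set.range x) := by
  have h := (attn x i).centerMass_mem_convexHull (w := fun _ => (1 : ℝ)) (fun _ _ => zero_le_one)
    (by simpa using attn_nonempty x i) (z := x) fun j _ => Set.mem_range_self j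
  simpa [Finset.centerMass, attnMean] using h

lemma inner_attnMean (x : Fin n → EuclideanSpace ℝ (Fin d)) (i : Fin n) :
    ⟪x i, attnMean x i⟫ = ⨆ ℓ, ⟪x i, x ℓ⟫ := by
  have hcard : ((attn x i).card : ℝ) ≠ 0 := by exact_mod_cast (attn_nonempty x i).card_pos.ne'
  rw [attnMean, real_inner_smul_right, inner_sum,
    Finset.sum_congr rfl fun j hj => inner_eq_iSup_of_mem_attn hj, Finset.sum_const, nsmul_eq_mul,
    inv_mul_cancel_left₀ hcard]

lemma IsDyn.succ_eq (h : IsDyn α z) (k : ℕ) (i : Fin n) :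
    z (k + 1) i = z k i + (α / (1 + α)) • (attnMean (z k) i - z k i) := by
  have hcard : ((attn (z k) i).card : ℝ) ≠ 0 := by
    exact_mod_cast (attn_nonempty (z k) i).card_pos.ne'
  rw [h k i, attnMean, Finset.sum_sub_distrib, smul_sub, Finset.sum_const,
    ← Nat.cast_smul_eq_nsmul ℝ, smul_smul, inv_mul_cancel₀ hcard, one_smul]

lemma IsDyn.antitone_convexHull (h : IsDyn α z) (hα : 0 < α) :
    Antitone fun k => convexHull ℝ (Set.range (z k)) := by
  refine antitone_nat_of_succ_le fun k => convexHull_min ?_ (convex_convexHull ℝ _)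
  rintro _ ⟨i, rfl⟩
  rw [h.succ_eq]
  exact (convex_convexHull ℝ _).add_smul_sub_mem (subset_convexHull ℝ _ (Set.mem_range_self i))
    (attnMean_mem_convexHull _ i) ⟨by positivity, (div_le_one (by linarith)).2 (by linarith)⟩

lemma IsDyn.exists_limitK_eq_convexHull (h : IsDyn α z) (hα : 0 < α) :
    ∃ w : Fin n → EuclideanSpace ℝ (Fin d), limitK z = convexHull ℝ (Set.range w) :=
  exists_iInter_convexHull_eq_convexHull (h.antitone_convexHull hα)

lemma IsDyn.finite_clusterSet (h : IsDyn α z) (hα : 0 < α) : (clusterSet (limitK z)).Finite := by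
  obtain ⟨w, hK⟩ := h.exists_limitK_eq_convexHull hα
  rw [hK]
  exact (Set.finite_range w).finite_clusterSet_convexHull

lemma IsDyn.sq_norm_succ (h : IsDyn α z) (k : ℕ) (i : Fin n) :
    ‖z (k + 1) i‖ ^ 2 = ‖z k i‖ ^ 2 + 2 * (α / (1 + α)) * ((⨆ ℓ, ⟪z k i, z k ℓ⟫) - ‖z k i‖ ^ 2)
      + ‖z (k + 1) i - z k i‖ ^ 2 := by
  rw [h.succ_eq, add_sub_cancel_left, norm_add_smul_sub_sq, inner_attnMean]

lemma IsDyn.tendsto_sq_norm_succ_sub (h : IsDyn α z) (hα : 0 < α) (i : Fin n) :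
    Tendsto (fun k => ‖z (k + 1) i‖ ^ 2 - ‖z k i‖ ^ 2) atTop (𝓝 0) := by
  refine Monotone.tendsto_add_one_sub (a := fun k => ‖z k i‖ ^ 2)
    (monotone_nat_of_le_succ fun k => ?_) ?_
  · have hc : 0 ≤ 2 * (α / (1 + α)) := by positivity
    rw [h.sq_norm_succ]
    linarith [mul_nonneg hc (sub_nonneg.2 (sq_norm_le_iSup_inner (z k) i)),
      sq_nonneg ‖z (k + 1) i - z k i‖]
  · obtain ⟨R, hR⟩ := ((Set.finite_range (z 0)).isCompact_convexHull ℝ).isBounded.exists_norm_le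
    refine ⟨R ^ 2, ?_⟩
    rintro _ ⟨k, rfl⟩
    exact pow_le_pow_left₀ (norm_nonneg _) (hR _ (h.antitone_convexHull hα (Nat.zero_le k)
      (subset_convexHull ℝ _ (Set.mem_range_self i)))) 2

lemma IsDyn.tendsto_iSup_inner_sub_sq_norm (h : IsDyn α z) (hα : 0 < α) (i : Fin n) :
    Tendsto (fun k => (⨆ ℓ, ⟪z k i, z k ℓ⟫) - ‖z k i‖ ^ 2) atTop (𝓝 0) := by
  have hc : 0 < 2 * (α / (1 + α)) := by positivity
  refine squeeze_zero (fun k => sub_nonneg.2 (sq_norm_le_iSup_inner (z k) i)) (fun k => ?_)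
    (by simpa using (h.tendsto_sq_norm_succ_sub hα i).div_const (2 * (α / (1 + α))))
  rw [le_div_iff₀' hc, h.sq_norm_succ]
  linarith [sq_nonneg ‖z (k + 1) i - z k i‖]

lemma IsDyn.tendsto_dist_succ (h : IsDyn α z) (hα : 0 < α) (i : Fin n) :
    Tendsto (fun k => dist (z (k + 1) i) (z k i)) atTop (𝓝 0) := by
  have hsq : Tendsto (fun k => dist (z (k + 1) i) (z k i) ^ 2) atTop (𝓝 0) := by
    refine squeeze_zero (fun _ => sq_nonneg _) (fun k => ?_) (h.tendsto_sq_norm_succ_sub hα i)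
    have hc : 0 ≤ 2 * (α / (1 + α)) := by positivity
    rw [dist_eq_norm, h.sq_norm_succ]
    linarith [mul_nonneg hc (sub_nonneg.2 (sq_norm_le_iSup_inner (z k) i))]
  simpa using hsq.sqrt

lemma IsDyn.eventually_exists_dist_lt (h : IsDyn α z) (hα : 0 < α) (i : Fin n) {δ : ℝ}
    (hδ : 0 < δ) : ∀ᶠ k in atTop, ∃ s ∈ clusterSet (limitK z), dist (z k i) s < δ := by
  have : Nonempty (Fin n) := ⟨i⟩
  obtain ⟨w, hK⟩ := h.exists_limitK_eq_convexHull hα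
  set U := ⋃ s ∈ clusterSet (limitK z), ball s δ
  let g : EuclideanSpace ℝ (Fin d) → ℝ :=
    fun x => Finset.univ.sup' Finset.univ_nonempty (fun j => ⟪x, w j⟫) - ‖x‖ ^ 2
  have hg : Continuous g := by fun_prop
  have hpos : ∀ x ∈ limitK z \ U, 0 < g x := by
    rintro x ⟨hxK, hxU⟩
    have hxS : x ∉ clusterSet (limitK z) := fun hxS => hxU (Set.mem_biUnion hxS (mem_ball_self hδ))
    rw [hK, mem_clusterSet_convexHull_iff (Set.finite_range w)] at hxS
    push Not at hxS
    obtain ⟨_, ⟨j, rfl⟩, hj⟩ := hxS (hK ▸ hxK)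
    exact sub_pos.2 (hj.trans_le (Finset.le_sup' (fun j => ⟪x, w j⟫) (Finset.mem_univ j)))
  obtain ⟨ρ, hρ, η, hη, hgη⟩ := (hK ▸ (Set.finite_range w).isCompact_convexHull ℝ :
    IsCompact (limitK z)).exists_pos_forall_thickening_sdiff_le
      (isOpen_biUnion fun _ _ => isOpen_ball) hg hpos
  have hnear := (h.antitone_convexHull hα).eventually_subset_of_iInter_subset
    (fun k => (Set.finite_range (z k)).isCompact_convexHull ℝ) isOpen_thickening
    (self_subset_thickening hρ _)
  filter_upwards [hnear, (h.tendsto_iSup_inner_sub_sq_norm hα i).eventually (gt_mem_nhds hη)]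
    with k hk hgap
  by_contra hfar
  have hkU : z k i ∉ U := by simpa [U] using hfar
  have hgk : g (z k i) ≤ (⨆ ℓ, ⟪z k i, z k ℓ⟫) - ‖z k i‖ ^ 2 :=
    sub_le_sub_right (Finset.sup'_le _ _ fun j _ => inner_le_iSup_of_mem_convexHull (z k) i
      (Set.iInter_subset _ k (hK ▸ subset_convexHull ℝ _ (Set.mem_range_self j)))) _
  linarith [hgη _ ⟨hk (subset_convexHull ℝ _ (Set.mem_range_self i)), hkU⟩]

end Dynamics

theorem no_indefinite_circulation_general {d n : ℕ} (α : ℝ) (hα : 0 < α)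
    (z : ℕ → Fin n → EuclideanSpace ℝ (Fin d)) (hdyn : IsDyn α z) :
    ∃ δ : ℝ, 0 < δ ∧
      (∀ s ∈ clusterSet (limitK z), ∀ s' ∈ clusterSet (limitK z), s ≠ s' →
        Disjoint (closedBall s δ) (closedBall s' δ)) ∧
      ∀ i : Fin n, ∃ s ∈ clusterSet (limitK z), ∃ k₀ : ℕ,
        ∀ k : ℕ, k₀ ≤ k → z k i ∈ closedBall s δ := by
  obtain ⟨r, hr, hsep⟩ := (hdyn.finite_clusterSet hα).exists_pos_le_dist
  refine ⟨r / 3, by positivity, fun s hs s' hs' hne => closedBall_disjoint_closedBall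
    (by linarith [hsep s hs s' hs' hne]), fun i => ?_⟩
  obtain ⟨s, hs, htrap⟩ := exists_eventually_dist_lt_of_separated (δ := r / 3)
    (fun s hs s' hs' hne => by linarith [hsep s hs s' hs' hne])
    (hdyn.eventually_exists_dist_lt hα i (by positivity))
    ((hdyn.tendsto_dist_succ hα i).eventually (gt_mem_nhds (by positivity)))
  obtain ⟨k₀, hk₀⟩ := eventually_atTop.1 htrap
  exact ⟨s, hs, k₀, fun k hk => mem_closedBall.2 (hk₀ k hk).le⟩

/-- No indefinite circulation: there is a `δ > 0` such that the closed `δ`-balls around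
distinct points of `S` are pairwise disjoint, and every token eventually stays in the closed
`δ`-ball of a single point of `S`. -/
theorem no_indefinite_circulation {d n : ℕ} (hd : 0 < d) (hn : 0 < n) (α : ℝ) (hα : 0 < α)
    (z : ℕ → Fin n → EuclideanSpace ℝ (Fin d)) (hdyn : IsDyn α z)
    (hdist : ∀ i j : Fin n, i ≠ j → z 0 i ≠ z 0 j) (hnz : ∀ i, z 0 i ≠ 0) :
    ∃ δ : ℝ, 0 < δ ∧
      (∀ s ∈ clusterSet (limitK z), ∀ s' ∈ clusterSet (limitK z), s ≠ s' →
        Disjoint (closedBall s δ) (closedBall s' δ)) ∧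
      ∀ i : Fin n, ∃ s ∈ clusterSet (limitK z), ∃ k₀ : ℕ,
        ∀ k : ℕ, k₀ ≤ k → z k i ∈ closedBall s δ :=
  no_indefinite_circulation_general α hα z hdyn
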